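/- For any convex body K in ℝⁿ, ω_K = inf_{O ∈ ℝⁿ} e_K(O) = liminf_{|O| → ∞} e_K(O), where ω_K is the thickness of K. -/

import Mathlib

open scoped RealInnerProductSpace
open Metric Filter

/-- Width of `K` in direction `u`: distance between the two supporting
hyperplanes of `K` orthogonal to the unit vector `u`. -/
noncomputable def widthFn {n : ℕ} (K : Set (EuclideanSpace ℝ (Fin n)))
    (u : EuclideanSpace ℝ (Fin n)) : ℝ :=
  sSup ((fun x => ⟪x, u⟫) '' K) - sInf ((fun x => ⟪x, u⟫) '' K)

/-- Diameter of `K` in direction `u`: maximal length of a chord of `K` parallel to `u`. -/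
noncomputable def dirDiam {n : ℕ} (K : Set (EuclideanSpace ℝ (Fin n)))
    (u : EuclideanSpace ℝ (Fin n)) : ℝ :=
  sSup {d : ℝ | ∃ x ∈ K, ∃ y ∈ K, (∃ t : ℝ, x - y = t • u) ∧ d = dist x y}

/-- Projective spherical distance `ρ(u,v) = arccos |⟨u,v⟩|`. -/
noncomputable def rho {n : ℕ} (u v : EuclideanSpace ℝ (Fin n)) : ℝ :=
  Real.arccos |⟪u, v⟫|

/-- `e_K(O)`: maximal length of a chord of `K` cut by a line through `O`. -/
noncomputable def eFn {n : ℕ} (K : Set (EuclideanSpace ℝ (Fin n)))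
    (O : EuclideanSpace ℝ (Fin n)) : ℝ :=
  sSup {d : ℝ | ∃ x ∈ K, ∃ y ∈ K, Collinear ℝ ({O, x, y} : Set (EuclideanSpace ℝ (Fin n))) ∧
    d = dist x y}

/-- `s_K(u)`: maximal distance between a point of `K` in one supporting hyperplane
orthogonal to `u` and a point of `K` in the other. -/
noncomputable def sFn {n : ℕ} (K : Set (EuclideanSpace ℝ (Fin n)))
    (u : EuclideanSpace ℝ (Fin n)) : ℝ :=
  sSup {d : ℝ | ∃ A ∈ K, ∃ B ∈ K,
    (∀ x ∈ K, ⟪x, u⟫ ≤ ⟪A, u⟫) ∧ (∀ x ∈ K, ⟪B, u⟫ ≤ ⟪x, u⟫) ∧ d = dist A B}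

/-- `r_K(u)`: infimum over diametral chords `[AB]` for `u` and pairs of parallel
supporting hyperplanes `H₁ ∋ A`, `H₂ ∋ B` of the distance between `H₁` and `H₂`. -/
noncomputable def rFn {n : ℕ} (K : Set (EuclideanSpace ℝ (Fin n)))
    (u : EuclideanSpace ℝ (Fin n)) : ℝ :=
  sInf {d : ℝ | ∃ A ∈ K, ∃ B ∈ K, (∃ t : ℝ, A - B = t • u) ∧ dist A B = dirDiam K u ∧
    ∃ v : EuclideanSpace ℝ (Fin n), ‖v‖ = 1 ∧
      (∀ x ∈ K, ⟪x, v⟫ ≤ ⟪A, v⟫) ∧ (∀ x ∈ K, ⟪B, v⟫ ≤ ⟪x, v⟫) ∧ d = ⟪A - B, v⟫}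

/-!
Every point `O` lies on a chord `[x, z]` of `K` whose endpoints carry parallel supporting
hyperplanes `{f = min_K f}` and `{f = max_K f}`. Let `h` be a homothety of center `O`. If `O ∉ K`,
give `h` the largest ratio `t ≥ 1` with `h x ∈ K` for some `x ∈ K`: then `h '' K` misses the
interior of `K`, and a hyperplane separating the two supports `K` at `z = h x` and, pulled back by
`h`, at `x`. If `O` is interior, give `h` the ratio `-λ` with `λ` largest such that `h '' K ⊆ K`
(computed with the gauge of `K` about `O`); a hyperplane supporting `K` at a boundary point
`z = h x` does the same. If `O ∈ ∂K`, a supporting hyperplane at `z = O` and the opposite one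
suffice. Such a chord is at least as long as the width of `K` in the normal direction, so
`ω_K ≤ e_K(O)` everywhere.

Conversely, if `K ⊆ closedBall 0 D` and `v` is a unit vector, the lines through `R • v` that meet
`K` are nearly parallel to `v`, so they cut `K` in chords of length at most
`(R + D) / (R - D) * w_K(v)`. Hence `liminf e_K ≤ ω_K`, and as `inf e_K ≤ liminf e_K`, both
equalities follow.
-/

open AffineMap Set Topology

section SupportedChord

variable {E : Type*} [NormedAddCommGroup E] [NormedSpace ℝ E] {K : Set E}

/-- For a convex body these are the diametral chords. -/
def IsSupportedChord (K : Set E) (x z : E) : Prop :=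
  x ∈ K ∧ z ∈ K ∧ ∃ f : E →L[ℝ] ℝ, f ≠ 0 ∧ IsMinOn f K x ∧ IsMaxOn f K z

lemma ContinuousLinearMap.map_homothety_sub_map_homothety (f : E →L[ℝ] ℝ) (O x y : E) (t : ℝ) :
    f (homothety O t x) - f (homothety O t y) = t * (f x - f y) := by
  simp only [homothety_apply, vsub_eq_sub, vadd_eq_add, map_add, map_smul, map_sub, smul_eq_mul]
  ring

lemma collinear_homothety (O x : E) (t : ℝ) : Collinear ℝ {O, x, homothety O t x} :=
  collinear_triple_of_mem_affineSpan_pair (left_mem_affineSpan_pair ℝ O x)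
    (right_mem_affineSpan_pair ℝ O x)
    (by rw [homothety_eq_lineMap]; exact lineMap_mem_affineSpan_pair t O x)

lemma Convex.exists_forall_le_of_notMem_interior (hK : Convex ℝ K)
    (hint : (interior K).Nonempty) {z : E} (hz : z ∉ interior K) :
    ∃ f : E →L[ℝ] ℝ, f ≠ 0 ∧ ∀ k ∈ K, f k ≤ f z := by
  obtain ⟨f, u, hf, hfK, hfz⟩ := geometric_hahn_banach_of_nonempty_interior hK
    (convex_singleton z) (disjoint_singleton_right.2 hz) hint (singleton_nonempty z)
  exact ⟨f, hf, fun k hk => (hfK k hk).trans (hfz z rfl)⟩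

lemma exists_isSupportedChord_of_mem_of_notMem_interior (hKc : IsCompact K) (hK : Convex ℝ K)
    (hint : (interior K).Nonempty) {O : E} (hOK : O ∈ K) (hO : O ∉ interior K) :
    ∃ x z, IsSupportedChord K x z ∧ Collinear ℝ {O, x, z} := by
  obtain ⟨f, hf, hfO⟩ := hK.exists_forall_le_of_notMem_interior hint hO
  obtain ⟨x, hx, hxmin⟩ := hKc.exists_isMinOn ⟨O, hOK⟩ f.continuous.continuousOn
  refine ⟨x, O, ⟨hx, hOK, f, hf, hxmin, isMaxOn_iff.2 hfO⟩, ?_⟩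
  simpa using collinear_homothety O x 0

lemma exists_isSupportedChord_of_notMem (hKc : IsCompact K) (hK : Convex ℝ K)
    (hint : (interior K).Nonempty) {O : E} (hO : O ∉ K) :
    ∃ x z, IsSupportedChord K x z ∧ Collinear ℝ {O, x, z} := by
  obtain ⟨k₀, hk₀⟩ := hint.mono interior_subset
  obtain ⟨R, hR⟩ := hKc.isBounded.subset_closedBall O
  have hr : 0 < infDist O K := (hKc.isClosed.notMem_iff_infDist_pos ⟨k₀, hk₀⟩).1 hO
  have hbound : ∀ t ≥ 0, ∀ k ∈ K, homothety O t k ∈ K → t ≤ R / infDist O K := by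
    intro t ht k hk htk
    have hdist := mem_closedBall'.1 (hR htk)
    rw [dist_center_homothety, Real.norm_eq_abs, abs_of_nonneg ht] at hdist
    rw [le_div_iff₀ hr]
    exact (mul_le_mul_of_nonneg_left (infDist_le_dist_of_mem hk) ht).trans hdist
  set C := (Icc 1 (R / infDist O K) ×ˢ K) ∩ {p : ℝ × E | homothety O p.1 p.2 ∈ K}
  have hCc : IsCompact C := (isCompact_Icc.prod hKc).inter_right
    (hKc.isClosed.preimage (by simp only [homothety_apply]; fun_prop))
  have hCne : C.Nonempty :=
    ⟨(1, k₀), ⟨⟨le_rfl, hbound 1 zero_le_one k₀ hk₀ (by simpa)⟩, hk₀⟩, by simpa⟩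
  obtain ⟨⟨t, x⟩, ⟨⟨⟨ht, -⟩, hx⟩, hz⟩, hmax⟩ :=
    hCc.exists_isMaxOn hCne continuous_fst.continuousOn
  have hdisj : Disjoint (interior K) (homothety O t '' K) := by
    rw [disjoint_right]
    rintro _ ⟨w, hw, rfl⟩ hwint
    have hcont : Continuous fun s : ℝ => homothety O s w := by
      simp only [homothety_apply]; fun_prop
    obtain ⟨s, hts, hs⟩ :=
      (hcont.continuousAt.eventually_mem (isOpen_interior.mem_nhds hwint)).exists_gt
    have hsK := interior_subset hs
    exact hts.not_ge <| isMaxOn_iff.1 hmax (s, w)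
      ⟨⟨⟨by linarith, hbound s (by linarith) w hw hsK⟩, hw⟩, hsK⟩
  obtain ⟨f, u, hf, hfK, hfu⟩ := geometric_hahn_banach_of_nonempty_interior hK
    (hK.affine_image (homothety O t)) hdisj hint ⟨_, mem_image_of_mem _ hk₀⟩
  refine ⟨x, homothety O t x, ⟨hx, hz, f, hf, isMinOn_iff.2 fun k hk => ?_,
    isMaxOn_iff.2 fun k hk => (hfK k hk).trans (hfu _ (mem_image_of_mem _ hx))⟩,
    collinear_homothety O x t⟩
  have hdiff := f.map_homothety_sub_map_homothety O k x t
  exact sub_nonneg.1 <| nonneg_of_mul_nonneg_right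
    (by linarith [hfu _ (mem_image_of_mem _ hk), hfK _ hz]) (by linarith : (0 : ℝ) < t)

lemma exists_isSupportedChord_of_mem_interior [Nontrivial E] (hKc : IsCompact K)
    (hK : Convex ℝ K) {O : E} (hO : O ∈ interior K) :
    ∃ x z, IsSupportedChord K x z ∧ Collinear ℝ {O, x, z} := by
  set τ := Homeomorph.addRight O
  set s := τ ⁻¹' K
  have hs : Convex ℝ s := hK.translate_preimage_left O
  have hs0 : s ∈ 𝓝 0 := mem_interior_iff_mem_nhds.1 <| by
    rw [← τ.preimage_interior]; simpa [τ] using hO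
  have hmem : ∀ y, gauge s y ≤ 1 → y + O ∈ K := fun y hy => by
    have := (gauge_le_one_iff_mem_closure hs hs0).1 hy
    rwa [(hKc.isClosed.preimage τ.continuous).closure_eq] at this
  have hsb : Bornology.IsVonNBounded ℝ s := (NormedSpace.isVonNBounded_iff ℝ).2
    (τ.isCompact_preimage.2 hKc).isBounded
  obtain ⟨k₁, hk₁, hk₁O⟩ : ∃ k ∈ K, k ≠ O :=
    ((eventually_nhdsWithin_of_eventually_nhds (mem_interior_iff_mem_nhds.1 hO)).and
      (self_mem_nhdsWithin : {O}ᶜ ∈ 𝓝[≠] O)).exists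
  -- `M⁻¹` is the largest `λ` for which `homothety O (-λ)` maps `K` into itself.
  obtain ⟨x, hx, hxmax⟩ := hKc.exists_isMaxOn ⟨k₁, hk₁⟩
    ((continuous_gauge hs hs0).comp (continuous_const.sub continuous_id)).continuousOn
      (f := fun k => gauge s (O - k))
  set M := gauge s (O - x)
  have hM : 0 < M :=
    ((gauge_pos (absorbent_nhds_zero hs0) hsb).2 (sub_ne_zero.2 hk₁O.symm)).trans_le
      (isMaxOn_iff.1 hxmax k₁ hk₁)
  have hh : ∀ k, homothety O (-M⁻¹) k = M⁻¹ • (O - k) + O := fun k => by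
    rw [homothety_apply, vsub_eq_sub, vadd_eq_add, neg_smul, ← smul_neg, neg_sub]
  have hgauge : ∀ k, gauge s (M⁻¹ • (O - k)) = M⁻¹ * gauge s (O - k) := fun k =>
    gauge_smul_of_nonneg (inv_nonneg.2 hM.le) _
  have hmaps : ∀ k ∈ K, homothety O (-M⁻¹) k ∈ K := fun k hk => by
    rw [hh]
    apply hmem
    rw [hgauge, inv_mul_le_one₀ hM]
    exact isMaxOn_iff.1 hxmax k hk
  have hz : homothety O (-M⁻¹) x ∉ interior K := by
    rw [hh]
    intro hzint
    have hzint' : M⁻¹ • (O - x) ∈ interior s := by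
      rw [← τ.preimage_interior]; simpa [τ] using hzint
    have hlt := (gauge_lt_one_iff_mem_interior hs hs0).2 hzint'
    rw [hgauge, inv_mul_cancel₀ hM.ne'] at hlt
    exact lt_irrefl _ hlt
  obtain ⟨f, hf, hfz⟩ := hK.exists_forall_le_of_notMem_interior ⟨O, hO⟩ hz
  refine ⟨x, homothety O (-M⁻¹) x, ⟨hx, hmaps x hx, f, hf, isMinOn_iff.2 fun k hk => ?_,
    isMaxOn_iff.2 hfz⟩, collinear_homothety O x _⟩
  have hdiff := f.map_homothety_sub_map_homothety O k x (-M⁻¹)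
  exact sub_nonneg.1 <| nonneg_of_mul_nonneg_right
    (by linarith [hfz _ (hmaps k hk)]) (inv_pos.2 hM)

theorem exists_isSupportedChord [Nontrivial E] (hKc : IsCompact K) (hK : Convex ℝ K)
    (hint : (interior K).Nonempty) (O : E) :
    ∃ x z, IsSupportedChord K x z ∧ Collinear ℝ {O, x, z} := by
  by_cases hOint : O ∈ interior K
  · exact exists_isSupportedChord_of_mem_interior hKc hK hOint
  by_cases hOK : O ∈ K
  · exact exists_isSupportedChord_of_mem_of_notMem_interior hKc hK hint hOK hOint
  · exact exists_isSupportedChord_of_notMem hKc hK hint hOK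

end SupportedChord

lemma norm_smul_mul_abs_inner_smul_comm {F : Type*} [NormedAddCommGroup F]
    [InnerProductSpace ℝ F] (a b : ℝ) (w v : F) :
    ‖a • w‖ * |⟪b • w, v⟫| = |⟪a • w, v⟫| * ‖b • w‖ := by
  simp only [norm_smul, real_inner_smul_left, abs_mul, Real.norm_eq_abs]
  ring

lemma tendsto_add_div_sub_atTop (D : ℝ) :
    Tendsto (fun R => (R + D) / (R - D)) atTop (𝓝 1) := by
  have hlim : Tendsto (fun R => 1 + 2 * D / (R + -D)) atTop (𝓝 (1 + 0)) :=
    tendsto_const_nhds.add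
      (tendsto_const_nhds.div_atTop (tendsto_atTop_add_const_right _ (-D) tendsto_id))
  rw [add_zero] at hlim
  refine hlim.congr' ?_
  filter_upwards [eventually_gt_atTop D] with R hR
  have hRD : R - D ≠ 0 := sub_ne_zero.2 hR.ne'
  rw [← sub_eq_add_neg]
  field_simp
  ring

section EuclideanSpace

variable {n : ℕ} {K : Set (EuclideanSpace ℝ (Fin n))}

lemma IsCompact.image_inner_left (hKc : IsCompact K) (u : EuclideanSpace ℝ (Fin n)) :
    IsCompact ((⟪·, u⟫) '' K) :=
  hKc.image (continuous_id.inner continuous_const)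

lemma widthFn_nonneg (hKc : IsCompact K) (hne : K.Nonempty) (u : EuclideanSpace ℝ (Fin n)) :
    0 ≤ widthFn K u :=
  sub_nonneg.2 <| csInf_le_csSup (hne.image _) (hKc.image_inner_left u).bddBelow
    (hKc.image_inner_left u).bddAbove

lemma abs_inner_sub_le_widthFn (hKc : IsCompact K) {x y : EuclideanSpace ℝ (Fin n)}
    (hx : x ∈ K) (hy : y ∈ K) (u : EuclideanSpace ℝ (Fin n)) :
    |⟪y - x, u⟫| ≤ widthFn K u := by
  have hbdd := hKc.image_inner_left u
  have h : ∀ {a b}, a ∈ K → b ∈ K → ⟪b, u⟫ - ⟪a, u⟫ ≤ widthFn K u := fun ha hb =>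
    sub_le_sub (le_csSup hbdd.bddAbove (mem_image_of_mem _ hb))
      (csInf_le hbdd.bddBelow (mem_image_of_mem _ ha))
  rw [inner_sub_left, abs_le]
  exact ⟨by linarith [h hy hx], h hx hy⟩

lemma widthFn_eq_of_isMinOn_of_isMaxOn {u x z : EuclideanSpace ℝ (Fin n)} (hx : x ∈ K)
    (hz : z ∈ K) (hmin : IsMinOn (⟪·, u⟫) K x) (hmax : IsMaxOn (⟪·, u⟫) K z) :
    widthFn K u = ⟪z, u⟫ - ⟪x, u⟫ := by
  have hg : IsGreatest ((⟪·, u⟫) '' K) ⟪z, u⟫ :=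
    ⟨mem_image_of_mem _ hz, forall_mem_image.2 (isMaxOn_iff.1 hmax)⟩
  have hl : IsLeast ((⟪·, u⟫) '' K) ⟪x, u⟫ :=
    ⟨mem_image_of_mem _ hx, forall_mem_image.2 (isMinOn_iff.1 hmin)⟩
  rw [widthFn, hg.csSup_eq, hl.csInf_eq]

lemma IsSupportedChord.exists_widthFn_le_dist {x z : EuclideanSpace ℝ (Fin n)}
    (h : IsSupportedChord K x z) :
    ∃ u : sphere (0 : EuclideanSpace ℝ (Fin n)) 1, widthFn K u ≤ dist x z := by
  obtain ⟨hx, hz, f, hf, hmin, hmax⟩ := h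
  set v := (InnerProductSpace.toDual ℝ _).symm f
  have hv : v ≠ 0 := by simpa [v] using hf
  set u := ‖v‖⁻¹ • v
  have hfu : ∀ k, ⟪k, u⟫ = ‖v‖⁻¹ * f k := fun k => by
    rw [real_inner_smul_right, real_inner_comm, InnerProductSpace.toDual_symm_apply]
  have hu : ‖u‖ = 1 := by
    rw [norm_smul, norm_inv, norm_norm, inv_mul_cancel₀ (norm_ne_zero_iff.2 hv)]
  refine ⟨⟨u, mem_sphere_zero_iff_norm.2 hu⟩, ?_⟩
  rw [widthFn_eq_of_isMinOn_of_isMaxOn hx hz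
    (isMinOn_iff.2 fun k hk => by simp only [hfu]; gcongr; exact isMinOn_iff.1 hmin k hk)
    (isMaxOn_iff.2 fun k hk => by simp only [hfu]; gcongr; exact isMaxOn_iff.1 hmax k hk),
    ← inner_sub_left, dist_comm, dist_eq_norm]
  simpa [hu] using real_inner_le_norm (z - x) u

lemma dist_le_eFn (hKb : Bornology.IsBounded K) {O x y : EuclideanSpace ℝ (Fin n)} (hx : x ∈ K)
    (hy : y ∈ K) (hcol : Collinear ℝ {O, x, y}) : dist x y ≤ eFn K O :=
  le_csSup ⟨diam K, by rintro _ ⟨a, ha, b, hb, -, rfl⟩; exact dist_le_diam_of_mem hKb ha hb⟩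
    ⟨x, hx, y, hy, hcol, rfl⟩

lemma eFn_le {O : EuclideanSpace ℝ (Fin n)} {c : ℝ} (hne : K.Nonempty)
    (h : ∀ x ∈ K, ∀ y ∈ K, Collinear ℝ {O, x, y} → dist x y ≤ c) : eFn K O ≤ c := by
  obtain ⟨k, hk⟩ := hne
  refine csSup_le ⟨_, k, hk, k, hk, by simpa using collinear_pair ℝ O k, rfl⟩ ?_
  rintro _ ⟨x, hx, y, hy, hcol, rfl⟩
  exact h x hx y hy hcol

lemma eFn_nonneg (hKb : Bornology.IsBounded K) (hne : K.Nonempty) (O : EuclideanSpace ℝ (Fin n)) :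
    0 ≤ eFn K O := by
  obtain ⟨k, hk⟩ := hne
  simpa using dist_le_eFn hKb hk hk (by simpa using collinear_pair ℝ O k)

lemma eFn_le_diam (hKb : Bornology.IsBounded K) (hne : K.Nonempty) (O : EuclideanSpace ℝ (Fin n)) :
    eFn K O ≤ diam K :=
  eFn_le hne fun _ hx _ hy _ => dist_le_diam_of_mem hKb hx hy

lemma bddBelow_range_widthFn (hKc : IsCompact K) (hne : K.Nonempty) :
    BddBelow (range fun u : sphere (0 : EuclideanSpace ℝ (Fin n)) 1 => widthFn K u) :=
  ⟨0, forall_mem_range.2 fun u => widthFn_nonneg hKc hne u⟩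

lemma iInf_widthFn_le_eFn [Nontrivial (EuclideanSpace ℝ (Fin n))] (hKc : IsCompact K)
    (hK : Convex ℝ K) (hint : (interior K).Nonempty) (O : EuclideanSpace ℝ (Fin n)) :
    ⨅ u : sphere (0 : EuclideanSpace ℝ (Fin n)) 1, widthFn K u ≤ eFn K O := by
  obtain ⟨x, z, hxz, hcol⟩ := exists_isSupportedChord hKc hK hint O
  obtain ⟨u, hu⟩ := hxz.exists_widthFn_le_dist
  exact (ciInf_le (bddBelow_range_widthFn hKc (hint.mono interior_subset)) u).trans
    (hu.trans (dist_le_eFn hKc.isBounded hxz.1 hxz.2.1 hcol))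

lemma eFn_smul_le (hKc : IsCompact K) (hne : K.Nonempty) {v : EuclideanSpace ℝ (Fin n)}
    (hv : ‖v‖ = 1) {D R : ℝ} (hD : K ⊆ closedBall 0 D) (hDR : D < R) :
    eFn K (R • v) ≤ (R + D) / (R - D) * widthFn K v := by
  refine eFn_le hne fun x hx y hy hcol => ?_
  obtain ⟨w, hw⟩ := (collinear_iff_of_mem (p₀ := x) (by simp)).1 hcol
  obtain ⟨a, rfl⟩ := hw y (by simp)
  obtain ⟨b, hb⟩ := hw (R • v) (by simp)
  have hxD : ‖x‖ ≤ D := by simpa using hD hx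
  have hfar : R - D ≤ ⟪R • v - x, v⟫ := by
    rw [inner_sub_left, real_inner_smul_left, real_inner_self_eq_norm_sq, hv]
    linarith [(real_inner_le_norm x v).trans_eq (by rw [hv, mul_one])]
  have hnorm : ‖R • v - x‖ ≤ R + D := by
    refine (norm_sub_le _ _).trans ?_
    rw [norm_smul, hv, Real.norm_eq_abs, abs_of_pos (by linarith [norm_nonneg x]), mul_one]
    linarith
  have hpar : ‖a • w‖ * |⟪R • v - x, v⟫| = |⟪a • w, v⟫| * ‖R • v - x‖ := by
    rw [hb, vadd_eq_add, add_sub_cancel_right]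
    exact norm_smul_mul_abs_inner_smul_comm a b w v
  have hwidth := abs_inner_sub_le_widthFn hKc hx hy v
  rw [vadd_eq_add, add_sub_cancel_right] at hwidth
  rw [div_mul_eq_mul_div, le_div_iff₀ (sub_pos.2 hDR), dist_comm, dist_eq_norm, vadd_eq_add,
    add_sub_cancel_right]
  calc ‖a • w‖ * (R - D) ≤ ‖a • w‖ * |⟪R • v - x, v⟫| :=
        mul_le_mul_of_nonneg_left (hfar.trans (le_abs_self _)) (norm_nonneg _)
    _ = |⟪a • w, v⟫| * ‖R • v - x‖ := hpar
    _ ≤ widthFn K v * (R + D) :=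
        mul_le_mul hwidth hnorm (norm_nonneg _) (widthFn_nonneg hKc hne v)
    _ = (R + D) * widthFn K v := mul_comm _ _

lemma liminf_eFn_cocompact_le_widthFn (hKc : IsCompact K) (hne : K.Nonempty)
    {v : EuclideanSpace ℝ (Fin n)} (hv : ‖v‖ = 1) :
    liminf (eFn K) (cocompact _) ≤ widthFn K v := by
  obtain ⟨D, hD⟩ := hKc.isBounded.subset_closedBall 0
  have hlim : Tendsto (fun R => (R + D) / (R - D) * widthFn K v) atTop (𝓝 (widthFn K v)) := by
    simpa using (tendsto_add_div_sub_atTop D).mul_const (widthFn K v)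
  have hray : Tendsto (fun R : ℝ => R • v) atTop (cocompact _) := by
    rw [← cobounded_eq_cocompact, ← tendsto_norm_atTop_iff_cobounded]
    simpa [norm_smul, hv] using tendsto_abs_atTop_atTop
  refine le_of_forall_pos_le_add fun ε hε => liminf_le_of_frequently_le ?_
    (isBoundedUnder_of ⟨0, eFn_nonneg hKc.isBounded hne⟩)
  refine hray.frequently (Eventually.frequently ?_)
  filter_upwards [eventually_gt_atTop D, hlim.eventually_lt_const (lt_add_of_pos_right _ hε)]
    with R hDR hRε
  exact (eFn_smul_le hKc hne hv hD hDR).trans hRε.le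

end EuclideanSpace

theorem thickness_eq_inf_eFn {n : ℕ} (hn : 2 ≤ n) (K : Set (EuclideanSpace ℝ (Fin n)))
    (hKc : IsCompact K) (hKconv : Convex ℝ K) (hKint : (interior K).Nonempty) :
    (⨅ u : sphere (0 : EuclideanSpace ℝ (Fin n)) 1, widthFn K u) =
      (⨅ O : EuclideanSpace ℝ (Fin n), eFn K O) ∧
    (⨅ u : sphere (0 : EuclideanSpace ℝ (Fin n)) 1, widthFn K u) =
      Filter.liminf (eFn K) (Filter.cocompact (EuclideanSpace ℝ (Fin n))) := by
  have : NeZero n := ⟨by omega⟩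
  have : Nonempty (sphere (0 : EuclideanSpace ℝ (Fin n)) 1) :=
    (NormedSpace.sphere_nonempty.2 zero_le_one).to_subtype
  have hne : K.Nonempty := hKint.mono interior_subset
  have hle_inf : ⨅ u : sphere (0 : EuclideanSpace ℝ (Fin n)) 1, widthFn K u ≤ ⨅ O, eFn K O :=
    le_ciInf (iInf_widthFn_le_eFn hKc hKconv hKint)
  have hinf_le : ⨅ O, eFn K O ≤ liminf (eFn K) (cocompact _) :=
    le_liminf_of_le (isBoundedUnder_of ⟨diam K, eFn_le_diam hKc.isBounded hne⟩).isCoboundedUnder_ge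
      (Eventually.of_forall (ciInf_le ⟨0, forall_mem_range.2 (eFn_nonneg hKc.isBounded hne)⟩))
  have hliminf_le : liminf (eFn K) (cocompact _) ≤
      ⨅ u : sphere (0 : EuclideanSpace ℝ (Fin n)) 1, widthFn K u :=
    le_ciInf fun u => liminf_eFn_cocompact_le_widthFn hKc hne (mem_sphere_zero_iff_norm.1 u.2)
  exact ⟨hle_inf.antisymm (hinf_le.trans hliminf_le), (hle_inf.trans hinf_le).antisymm hliminf_le⟩
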